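/- Let M > 0 and let g(x) = 1/log(1 + M/x) for x > 0. Then for any finite collection of positive reals x_1, …, x_K, (1/K) ∑_{k=1}^K g(x_k) ≤ g((1/K) ∑_{k=1}^K x_k). -/

import Mathlib

/-!
Write `g = L⁻¹` with `L x = log (1 + M / x)`. Then `g'' = (2 L'² - L L'') / L³`, and with
`L' = (x + M)⁻¹ - x⁻¹` the condition `2 L'² ≤ L L''` reduces to `2 M ≤ (2 x + M) L x`, which is the
classical bound `2 u / (u + 2) ≤ log (1 + u)` at `u = M / x`. So `g` is concave on `(0, ∞)`, and
the claim is Jensen's inequality with uniform weights.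
-/

open Real Set Finset

theorem concaveOn_inv_of_hasDerivAt2_of_two_mul_sq_le {D : Set ℝ} (hD : Convex ℝ D)
    {f f' f'' : ℝ → ℝ} (hf : ∀ x ∈ D, HasDerivAt f (f' x) x)
    (hf' : ∀ x ∈ D, HasDerivAt f' (f'' x) x) (hpos : ∀ x ∈ D, 0 < f x)
    (hineq : ∀ x ∈ D, 2 * f' x ^ 2 ≤ f x * f'' x) :
    ConcaveOn ℝ D fun x ↦ (f x)⁻¹ := by
  have hinv : ∀ x ∈ D, HasDerivAt (fun y ↦ (f y)⁻¹) (-f' x / f x ^ 2) x := fun x hx ↦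
    (hf x hx).inv (hpos x hx).ne'
  have hinv' : ∀ x ∈ D, HasDerivAt (fun y ↦ -f' y / f y ^ 2)
      ((-f'' x * f x ^ 2 - -f' x * (2 * f x ^ 1 * f' x)) / (f x ^ 2) ^ 2) x := fun x hx ↦
    (hf' x hx).neg.div ((hf x hx).pow 2) (pow_pos (hpos x hx) 2).ne'
  refine concaveOn_of_hasDerivWithinAt2_nonpos hD
    (fun x hx ↦ (hinv x hx).continuousAt.continuousWithinAt)
    (fun x hx ↦ (hinv x (interior_subset hx)).hasDerivWithinAt)
    (fun x hx ↦ (hinv' x (interior_subset hx)).hasDerivWithinAt) fun x hx ↦ ?_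
  have hx := interior_subset hx
  have hfx := hpos x hx
  apply div_nonpos_of_nonpos_of_nonneg _ (by positivity)
  nlinarith [hineq x hx]

theorem hasDerivAt_log_one_add_div {M x : ℝ} (hx : x ≠ 0) (hxM : x + M ≠ 0) :
    HasDerivAt (fun y ↦ log (1 + M / y)) ((x + M)⁻¹ - x⁻¹) x := by
  have h1 : 1 + M / x ≠ 0 := by rw [one_add_div hx]; exact div_ne_zero hxM hx
  have := (((hasDerivAt_inv hx).const_mul M).const_add 1).log h1
  simp only [← div_eq_mul_inv] at this
  convert this using 1
  rw [one_add_div hx]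
  field_simp
  ring

theorem two_mul_le_mul_log_one_add_div {M x : ℝ} (hM : 0 ≤ M) (hx : 0 < x) :
    2 * M ≤ (2 * x + M) * log (1 + M / x) := by
  have key := le_log_one_add_of_nonneg (div_nonneg hM hx.le)
  rw [div_le_iff₀ (by positivity)] at key
  calc 2 * M = x * (2 * (M / x)) := by field_simp
    _ ≤ x * (log (1 + M / x) * (M / x + 2)) := by gcongr
    _ = (2 * x + M) * log (1 + M / x) := by field_simp; ring

theorem concaveOn_inv_log_one_add_div {M : ℝ} (hM : 0 < M) :
    ConcaveOn ℝ (Ioi 0) fun x ↦ (log (1 + M / x))⁻¹ := by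
  refine concaveOn_inv_of_hasDerivAt2_of_two_mul_sq_le (convex_Ioi 0)
    (f' := fun x ↦ (x + M)⁻¹ - x⁻¹) (f'' := fun x ↦ (x ^ 2)⁻¹ - ((x + M) ^ 2)⁻¹)
    (fun x hx ↦ hasDerivAt_log_one_add_div hx.ne' (add_pos hx hM).ne')
    (fun x hx ↦ ?_) (fun x hx ↦ log_pos (lt_add_of_pos_right 1 (div_pos hM hx))) fun x hx ↦ ?_
  · have hxM : 0 < x + M := add_pos hx hM
    exact ((((hasDerivAt_id' x).add_const M).inv hxM.ne').fun_sub
      (hasDerivAt_inv hx.ne')).congr_deriv (by ring)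
  · have hx : 0 < x := hx
    calc 2 * ((x + M)⁻¹ - x⁻¹) ^ 2 = M / (x * (x + M)) ^ 2 * (2 * M) := by field_simp; ring
      _ ≤ M / (x * (x + M)) ^ 2 * ((2 * x + M) * log (1 + M / x)) :=
        mul_le_mul_of_nonneg_left (two_mul_le_mul_log_one_add_div hM.le hx) (by positivity)
      _ = log (1 + M / x) * ((x ^ 2)⁻¹ - ((x + M) ^ 2)⁻¹) := by field_simp; ring

theorem g_jensen (M : ℝ) (hM : 0 < M) (K : ℕ) (hK : 0 < K)
    (x : Fin K → ℝ) (hx : ∀ k, 0 < x k) :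
    (1 / (K : ℝ)) * ∑ k, 1 / Real.log (1 + M / x k) ≤
      1 / Real.log (1 + M / ((1 / (K : ℝ)) * ∑ k, x k)) := by
  have hweights : ∑ _k : Fin K, 1 / (K : ℝ) = 1 := by
    rw [sum_const, card_univ, Fintype.card_fin, nsmul_eq_mul, mul_one_div_cancel]
    exact_mod_cast hK.ne'
  have := (concaveOn_inv_log_one_add_div hM).le_map_sum (t := univ)
    (fun _ _ ↦ by positivity) hweights fun k _ ↦ hx k
  simpa only [smul_eq_mul, ← mul_sum, one_div] using this
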